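/- Let D be a C*-algebra and let e be a projection in the multiplier algebra M(D) (i.e. e = e* = e²). Let D_e = {a ∈ D : e·ι(a)·e = ι(a)} be the corner of D determined by e, and assume the corner is full, i.e. the smallest closed two-sided ideal of D containing D_e is D itself. If D contains a nonzero commutative hereditary C*-subalgebra, then D_e contains a nonzero commutative hereditary C*-subalgebra of D. -/

import Mathlib

open scoped MultiplierAlgebra

/-- A *hereditary C*-subalgebra* of a C*-algebra `D`: a norm-closed star-subalgebra `C ⊆ D`
such that whenever `a ∈ D` and `b ∈ C` satisfy `0 ≤ a ≤ b`, then `a ∈ C`. -/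
def IsHereditarySubalgebra {D : Type*} [NonUnitalCStarAlgebra D] [PartialOrder D]
    [StarOrderedRing D] (C : NonUnitalStarSubalgebra ℂ D) : Prop :=
  IsClosed (C : Set D) ∧ ∀ ⦃a b : D⦄, b ∈ C → 0 ≤ a → a ≤ b → a ∈ C

/-!
Take a nonzero positive `b` in the given commutative hereditary subalgebra `B`. Fullness of the
corner yields `s` with `w := e s b` satisfying `w b ≠ 0`: otherwise the closed ideal
`{x | x D b² = 0}` would contain the corner. Since `w* w = b (s* e s) b` lies in `B`, the set
`w B w*` is a commutative star subalgebra; it lies in the corner because `e w = w`, and it is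
nonzero because it contains `(w b)(w b)*`. Its closure is hereditary since it is stable under
`y ↦ y* z y`, and in a C⋆-algebra `0 ≤ a ≤ c` forces `a ∈ closure (c D c)`: compressing `a` by
`F = c g(c) c`, with `t² g(t)` a continuous cutoff rising from `0` to `1` on `[0, δ]`, moves it by
at most `2 √(‖a‖ δ)`, because `‖(1 - F) a (1 - F)‖ ≤ ‖(1 - F) c (1 - F)‖ ≤ δ`.
-/

open scoped CStarAlgebra ComplexStarModule

lemma CStarRing.eq_zero_of_forall_mul_mul_eq_zero {A : Type*} [NonUnitalNormedRing A] [StarRing A]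
    [CStarRing A] {c : A} (h : ∀ x d : A, x * d * c = 0) : c = 0 := by
  have hsq : star (star c * c) * (star c * c) = 0 := by
    simpa only [star_mul, star_star, mul_assoc] using h (star c) (c * star c)
  rwa [CStarRing.star_mul_self_eq_zero_iff, CStarRing.star_mul_self_eq_zero_iff] at hsq

lemma exists_mul_mul_approx_one {δ : ℝ} (hδ : 0 < δ) : ∃ g : ℝ → ℝ, Continuous g ∧ g 0 = 0 ∧
    ∀ t, 0 ≤ t → t * g t * t ∈ Set.Icc 0 1 ∧ (1 - t * g t * t) ^ 2 * t ≤ δ := by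
  refine ⟨fun t => min (t / δ ^ 3) (max t δ ^ 2)⁻¹, ?_, by simp, fun t ht => ?_⟩
  · have hpos : ∀ t, max t δ ^ 2 ≠ 0 := fun t => (pow_pos (hδ.trans_le (le_max_right t δ)) 2).ne'
    exact Continuous.min (by fun_prop) (Continuous.inv₀ (by fun_prop) hpos)
  beta_reduce
  have hmax : 0 < max t δ := hδ.trans_le (le_max_right t δ)
  have hf₀ : 0 ≤ t * min (t / δ ^ 3) (max t δ ^ 2)⁻¹ * t := by positivity
  have hf₁ : t * min (t / δ ^ 3) (max t δ ^ 2)⁻¹ * t ≤ 1 := by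
    calc t * min (t / δ ^ 3) (max t δ ^ 2)⁻¹ * t ≤ t * (max t δ ^ 2)⁻¹ * t := by
          gcongr; exact min_le_right _ _
      _ = (t / max t δ) ^ 2 := by ring
      _ ≤ 1 := pow_le_one₀ (by positivity) ((div_le_one hmax).mpr (le_max_left t δ))
  refine ⟨⟨hf₀, hf₁⟩, ?_⟩
  rcases le_or_gt δ t with hδt | htδ
  · have ht₀ : 0 < t := hδ.trans_le hδt
    have hmin : min (t / δ ^ 3) (max t δ ^ 2)⁻¹ = (t ^ 2)⁻¹ := by
      rw [max_eq_left hδt, min_eq_right]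
      rw [inv_le_iff_one_le_mul₀ (by positivity), div_mul_eq_mul_div, le_div_iff₀ (by positivity)]
      nlinarith [pow_le_pow_left₀ hδ.le hδt 3]
    rw [hmin, show t * (t ^ 2)⁻¹ * t = 1 by field_simp]
    simpa using hδ.le
  · calc (1 - t * min (t / δ ^ 3) (max t δ ^ 2)⁻¹ * t) ^ 2 * t ≤ 1 * t := by
          gcongr; nlinarith
      _ ≤ δ := by linarith

lemma CStarAlgebra.sq_norm_mul_le {A : Type*} [NonUnitalCStarAlgebra A] [PartialOrder A]
    [StarOrderedRing A] {x : A} (c : A) (hx : 0 ≤ x) :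
    ‖c * x‖ ^ 2 ≤ ‖x‖ * ‖c * x * star c‖ := by
  set r := CFC.sqrt x
  have hr : star r = r := (CFC.sqrt_nonneg x).isSelfAdjoint.star_eq
  have hrr : r * r = x := CFC.sqrt_mul_sqrt_self x hx
  calc ‖c * x‖ ^ 2 = ‖(c * r) * x * star (c * r)‖ := by
        rw [sq, ← CStarRing.norm_self_mul_star, ← hrr]
        simp only [star_mul, hr, mul_assoc]
    _ ≤ ‖c * r‖ * ‖x‖ * ‖star (c * r)‖ := norm_mul₃_le
    _ = ‖x‖ * ‖(c * r) * star (c * r)‖ := by rw [CStarRing.norm_self_mul_star, norm_star]; ring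
    _ = ‖x‖ * ‖c * x * star c‖ := by
        rw [← hrr, star_mul, hr]
        simp only [mul_assoc]

section Unital

variable {A : Type*} [CStarAlgebra A]

lemma IsSelfAdjoint.one_sub_cfc_mul_mul_one_sub_cfc {y : A} (hy : IsSelfAdjoint y) (f : ℝ → ℝ)
    (hf : Continuous f) :
    (1 - cfc f y) * y * (1 - cfc f y) = cfc (fun t => (1 - f t) ^ 2 * t) y := by
  have hsub : 1 - cfc f y = cfc (fun t => 1 - f t) y := by
    rw [cfc_sub (fun _ => 1) f y, cfc_const_one ℝ y]
  calc (1 - cfc f y) * y * (1 - cfc f y)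
      = cfc (fun t => 1 - f t) y * cfc id y * cfc (fun t => 1 - f t) y := by rw [hsub, cfc_id ℝ y]
    _ = cfc (fun t => (1 - f t) ^ 2 * t) y := by
      rw [← cfc_mul _ _ y, ← cfc_mul _ _ y]
      exact cfc_congr fun t _ => by simp only [id]; ring

variable [PartialOrder A] [StarOrderedRing A]

lemma CStarAlgebra.norm_sub_mul_mul_le {x y F : A} (hx : 0 ≤ x) (hxy : x ≤ y)
    (hF : IsSelfAdjoint F) (hF₁ : ‖F‖ ≤ 1) :
    ‖x - F * x * F‖ ≤ 2 * √(‖x‖ * ‖(1 - F) * y * (1 - F)‖) := by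
  have hc : star (1 - F) = 1 - F := by rw [star_sub, star_one, hF.star_eq]
  have hleft : ‖(1 - F) * x‖ ≤ √(‖x‖ * ‖(1 - F) * y * (1 - F)‖) := by
    refine Real.le_sqrt_of_sq_le ((sq_norm_mul_le (1 - F) hx).trans ?_)
    rw [hc]
    gcongr
    refine norm_le_norm_of_nonneg_of_le ?_ ?_
    · simpa [hc] using star_left_conjugate_nonneg hx (1 - F)
    · simpa [hc] using star_left_conjugate_le_conjugate hxy (1 - F)
  have hright : ‖x * (1 - F)‖ = ‖(1 - F) * x‖ := by
    rw [← norm_star, star_mul, hc, hx.isSelfAdjoint.star_eq]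
  calc ‖x - F * x * F‖ = ‖(1 - F) * x + F * (x * (1 - F))‖ := by noncomm_ring
    _ ≤ ‖(1 - F) * x‖ + ‖F‖ * ‖x * (1 - F)‖ := norm_add_le_of_le le_rfl (norm_mul_le _ _)
    _ ≤ ‖(1 - F) * x‖ + 1 * ‖(1 - F) * x‖ := by rw [hright]; gcongr
    _ ≤ 2 * √(‖x‖ * ‖(1 - F) * y * (1 - F)‖) := by linarith

end Unital

section NonUnital

variable {A : Type*} [NonUnitalCStarAlgebra A]

lemma Unitization.inr_mul_cfcₙ_mul {y : A} (hy : IsSelfAdjoint y) {g : ℝ → ℝ} (hg : Continuous g)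
    (hg₀ : g 0 = 0) :
    ((y * cfcₙ g y * y : A) : A⁺¹) = cfc (fun t => t * g t * t) (y : A⁺¹) := by
  rw [Unitization.inr_mul, Unitization.inr_mul, Unitization.real_cfcₙ_eq_cfc_inr y g hg₀,
    cfc_mul _ _ (y : A⁺¹), cfc_mul _ _ (y : A⁺¹), cfc_id' ℝ (y : A⁺¹)]

variable [PartialOrder A] [StarOrderedRing A]

lemma mem_closure_mul_mul_of_le {x y : A} (hx : 0 ≤ x) (hxy : x ≤ y) :
    x ∈ closure (Set.range fun z => y * z * y) := by
  have hy : 0 ≤ y := hx.trans hxy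
  rw [Metric.mem_closure_iff]
  intro ε hε
  have hlim : Filter.Tendsto (fun δ => 2 * √(‖x‖ * δ)) (nhdsWithin 0 (Set.Ioi 0)) (nhds 0) := by
    have : Continuous (fun δ : ℝ => 2 * √(‖x‖ * δ)) := by fun_prop
    simpa using (this.tendsto 0).mono_left nhdsWithin_le_nhds
  obtain ⟨δ, hδε, hδ⟩ := ((hlim.eventually (gt_mem_nhds hε)).and self_mem_nhdsWithin).exists
  obtain ⟨g, hg, hg₀, hf⟩ := exists_mul_mul_approx_one (Set.mem_Ioi.mp hδ)
  refine ⟨y * (cfcₙ g y * y * x * y * cfcₙ g y) * y, ⟨_, rfl⟩, ?_⟩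
  set Y : A⁺¹ := ↑y
  have hY : 0 ≤ Y := Unitization.inr_nonneg_iff.mpr hy
  have hspec : ∀ t ∈ spectrum ℝ Y, 0 ≤ t := fun t ht => spectrum_nonneg_of_nonneg hY ht
  set F := cfc (fun t => t * g t * t) Y
  have hF : ((y * cfcₙ g y * y : A) : A⁺¹) = F :=
    Unitization.inr_mul_cfcₙ_mul hy.isSelfAdjoint hg hg₀
  have hF₁ : ‖F‖ ≤ 1 := norm_cfc_le zero_le_one fun t ht => by
    rw [Real.norm_of_nonneg (hf t (hspec t ht)).1.1]
    exact (hf t (hspec t ht)).1.2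
  have hFY : ‖(1 - F) * Y * (1 - F)‖ ≤ δ := by
    rw [hY.isSelfAdjoint.one_sub_cfc_mul_mul_one_sub_cfc _ (by fun_prop)]
    refine norm_cfc_le hδ.le fun t ht => ?_
    rw [Real.norm_of_nonneg (by have := hspec t ht; positivity)]
    exact (hf t (hspec t ht)).2
  have hdist : dist x (y * (cfcₙ g y * y * x * y * cfcₙ g y) * y) = ‖(x : A⁺¹) - F * x * F‖ := by
    rw [dist_eq_norm, ← Unitization.norm_inr (𝕜 := ℂ), ← hF]
    simp only [Unitization.inr_sub, Unitization.inr_mul, mul_assoc]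
  calc dist x (y * (cfcₙ g y * y * x * y * cfcₙ g y) * y)
      ≤ 2 * √(‖(x : A⁺¹)‖ * ‖(1 - F) * Y * (1 - F)‖) := by
        rw [hdist]
        refine CStarAlgebra.norm_sub_mul_mul_le (Unitization.inr_nonneg_iff.mpr hx) ?_
          (cfc_predicate _ Y) hF₁
        exact (Unitization.inr_le_iff x y hx.isSelfAdjoint hy.isSelfAdjoint).mpr hxy
    _ ≤ 2 * √(‖x‖ * δ) := by rw [Unitization.norm_inr]; gcongr
    _ < ε := hδε

section Hereditary

variable {B C : NonUnitalStarSubalgebra ℂ A}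

lemma IsHereditarySubalgebra.star_mul_mul_mem (hB : IsHereditarySubalgebra B) {z : A}
    (hz : z ∈ B) (m : A) : star z * m * z ∈ B := by
  have hzz : star z * z ∈ B := mul_mem (star_mem hz) hz
  have real_smul_mem : ∀ r : ℝ, r • (star z * z) ∈ B := fun r => by
    simpa [Complex.coe_smul] using SMulMemClass.smul_mem (r : ℂ) hzz
  have hsa : ∀ m : A, IsSelfAdjoint m → star z * m * z ∈ B := by
    intro m hm
    set p := ‖m‖ • (star z * z)
    have hle : star z * m * z ≤ p := CStarAlgebra.star_left_conjugate_le_norm_smul hm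
    have hge : -(star z * m * z) ≤ p := by
      simpa [norm_neg] using CStarAlgebra.star_left_conjugate_le_norm_smul (a := z) hm.neg
    have hq : star z * m * z + p ∈ B :=
      hB.2 (add_mem (real_smul_mem _) (real_smul_mem _)) (neg_le_iff_add_nonneg'.mp hge)
        (add_le_add_left hle p)
    simpa [p] using sub_mem hq (real_smul_mem ‖m‖)
  rw [← realPart_add_I_smul_imaginaryPart m, mul_add, add_mul, mul_smul_comm, smul_mul_assoc]
  exact add_mem (hsa _ (ℜ m).prop) (SMulMemClass.smul_mem _ (hsa _ (ℑ m).prop))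

lemma isHereditarySubalgebra_of_star_mul_mul_mem (hC : IsClosed (C : Set A))
    (h : ∀ y ∈ C, ∀ z : A, star y * z * y ∈ C) : IsHereditarySubalgebra C := by
  refine ⟨hC, fun a b hb ha hab => ?_⟩
  have hb' : star b = b := (ha.trans hab).isSelfAdjoint.star_eq
  refine hC.closure_subset_iff.mpr ?_ (mem_closure_mul_mul_of_le ha hab)
  rintro _ ⟨z, rfl⟩
  simpa [hb'] using h b hb z

end Hereditary

end NonUnital

namespace NonUnitalStarSubalgebra

section Conj

variable {R A : Type*} [CommSemiring R] [NonUnitalSemiring A] [StarRing A]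
  [Module R A] [IsScalarTower R A A] [SMulCommClass R A A]
  (B : NonUnitalStarSubalgebra R A) {w : A} (hw : star w * w ∈ B)

def conj : NonUnitalStarSubalgebra R A where
  carrier := (fun c => w * c * star w) '' B
  add_mem' := by
    rintro _ _ ⟨c₁, hc₁, rfl⟩ ⟨c₂, hc₂, rfl⟩
    exact ⟨c₁ + c₂, add_mem hc₁ hc₂, by simp only [mul_add, add_mul]⟩
  zero_mem' := ⟨0, zero_mem B, by simp⟩
  mul_mem' := by
    rintro _ _ ⟨c₁, hc₁, rfl⟩ ⟨c₂, hc₂, rfl⟩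
    exact ⟨c₁ * (star w * w) * c₂, mul_mem (mul_mem hc₁ hw) hc₂, by simp only [mul_assoc]⟩
  smul_mem' := by
    rintro r _ ⟨c, hc, rfl⟩
    exact ⟨r • c, SMulMemClass.smul_mem r hc, by simp only [mul_smul_comm, smul_mul_assoc]⟩
  star_mem' := by
    rintro _ ⟨c, hc, rfl⟩
    exact ⟨star c, star_mem hc, by simp only [star_mul, star_star, mul_assoc]⟩

variable {B}

lemma conj_mul_comm (hB : ∀ x ∈ B, ∀ y ∈ B, x * y = y * x) :
    ∀ x ∈ B.conj hw, ∀ y ∈ B.conj hw, x * y = y * x := by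
  rintro _ ⟨c₁, hc₁, rfl⟩ _ ⟨c₂, hc₂, rfl⟩
  have key : c₁ * (star w * w) * c₂ = c₂ * (star w * w) * c₁ := by
    rw [hB _ (mul_mem hc₁ hw) _ hc₂, hB _ hc₁ _ hw, ← mul_assoc]
  calc w * c₁ * star w * (w * c₂ * star w) = w * (c₁ * (star w * w) * c₂) * star w := by
        simp only [mul_assoc]
    _ = w * (c₂ * (star w * w) * c₁) * star w := by rw [key]
    _ = w * c₂ * star w * (w * c₁ * star w) := by simp only [mul_assoc]

end Conj

lemma topologicalClosure_mul_comm {R A : Type*} [CommSemiring R] [TopologicalSpace A]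
    [Star A] [NonUnitalSemiring A] [Module R A] [IsSemitopologicalSemiring A] [ContinuousStar A]
    [ContinuousConstSMul R A] [T2Space A] {B : NonUnitalStarSubalgebra R A}
    (hB : ∀ x ∈ B, ∀ y ∈ B, x * y = y * x) :
    ∀ x ∈ B.topologicalClosure, ∀ y ∈ B.topologicalClosure, x * y = y * x := by
  let _ := B.nonUnitalCommSemiringTopologicalClosure fun x y => Subtype.ext (hB _ x.2 _ y.2)
  intro x hx y hy
  exact congrArg Subtype.val (mul_comm (⟨x, hx⟩ : B.topologicalClosure) ⟨y, hy⟩)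

lemma star_mul_mul_mem_topologicalClosure {R A : Type*} [CommSemiring R] [TopologicalSpace A]
    [NonUnitalSemiring A] [StarRing A] [Module R A] [IsTopologicalSemiring A] [ContinuousStar A]
    [ContinuousConstSMul R A] {C : NonUnitalStarSubalgebra R A}
    (h : ∀ y ∈ C, ∀ z : A, star y * z * y ∈ C) :
    ∀ y ∈ C.topologicalClosure, ∀ z : A, star y * z * y ∈ C.topologicalClosure := fun y hy z =>
  map_mem_closure (f := fun v => star v * z * v) (by fun_prop) hy fun v hv => h v hv z

end NonUnitalStarSubalgebra

section Hereditary

variable {A : Type*} [NonUnitalCStarAlgebra A] [PartialOrder A] [StarOrderedRing A]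
  {B : NonUnitalStarSubalgebra ℂ A}

lemma IsHereditarySubalgebra.star_mul_mul_mem_conj (hB : IsHereditarySubalgebra B) {w : A}
    (hw : star w * w ∈ B) : ∀ y ∈ B.conj hw, ∀ z : A, star y * z * y ∈ B.conj hw := by
  rintro _ ⟨c, hc, rfl⟩ z
  refine ⟨star c * (star w * z * w) * c, hB.star_mul_mul_mem hc _, ?_⟩
  simp only [star_mul, star_star, mul_assoc]

lemma IsHereditarySubalgebra.topologicalClosure_conj (hB : IsHereditarySubalgebra B) {w : A}
    (hw : star w * w ∈ B) : IsHereditarySubalgebra (B.conj hw).topologicalClosure :=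
  isHereditarySubalgebra_of_star_mul_mul_mem isClosed_closure
    (NonUnitalStarSubalgebra.star_mul_mul_mem_topologicalClosure (hB.star_mul_mul_mem_conj hw))

end Hereditary

namespace DoubleCentralizer

variable {A : Type*} [NonUnitalCStarAlgebra A]

lemma coe_mul (a b : A) : ((a * b : A) : 𝓜(ℂ, A)) = (a : 𝓜(ℂ, A)) * (b : 𝓜(ℂ, A)) :=
  map_mul (coeHom (𝕜 := ℂ) (A := A)) a b

lemma coe_star (a : A) : ((star a : A) : 𝓜(ℂ, A)) = star (a : 𝓜(ℂ, A)) :=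
  map_star (coeHom (𝕜 := ℂ) (A := A)) a

lemma coe_injective : Function.Injective ((↑) : A → 𝓜(ℂ, A)) := by
  refine (injective_iff_map_eq_zero (coeHom (𝕜 := ℂ) (A := A))).mpr fun a ha => ?_
  have h : a * star a = 0 := by
    simpa using congrArg (fun m : 𝓜(ℂ, A) => m.fst (star a)) ha
  exact (CStarRing.mul_star_self_eq_zero_iff a).mp h

lemma coe_zero : ((0 : A) : 𝓜(ℂ, A)) = 0 :=
  map_zero (coeHom (𝕜 := ℂ) (A := A))

lemma continuous_coe : Continuous ((↑) : A → 𝓜(ℂ, A)) :=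
  map_continuous (coeHom (𝕜 := ℂ) (A := A))

lemma fst_mul (m : 𝓜(ℂ, A)) (x y : A) : m.fst (x * y) = m.fst x * y := by
  refine sub_eq_zero.mp (CStarRing.eq_zero_of_forall_mul_mul_eq_zero fun z d => ?_)
  rw [mul_sub, ← m.central, ← mul_assoc, m.central, mul_assoc, sub_self]

lemma mul_coe (m : 𝓜(ℂ, A)) (x : A) : m * (x : 𝓜(ℂ, A)) = (m.fst x : 𝓜(ℂ, A)) := by
  ext y
  · simp [fst_mul]
  · simpa using m.central y x

def corner (e : 𝓜(ℂ, A)) : Set A := {a | e * a * e = a}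

lemma isClosed_corner (e : 𝓜(ℂ, A)) : IsClosed (corner e) :=
  isClosed_eq ((continuous_const.mul continuous_coe).mul continuous_const) continuous_coe

variable {e : 𝓜(ℂ, A)}

lemma star_fst_mul_fst (he : IsStarProjection e) (a : A) :
    star (e.fst a) * e.fst a = star a * e.fst a := by
  apply coe_injective
  simp only [coe_mul, coe_star, ← mul_coe, star_mul, he.isSelfAdjoint.star_eq, mul_assoc]
  rw [← mul_assoc e e, he.isIdempotentElem.eq]

lemma fst_mul_mul_star_fst_mem_corner (he : IsStarProjection e) (a c : A) :
    e.fst a * c * star (e.fst a) ∈ corner e := by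
  have hee : ∀ x : 𝓜(ℂ, A), e * (e * x) = e * x := fun x => by
    rw [← mul_assoc, he.isIdempotentElem.eq]
  show e * _ * e = _
  simp only [coe_mul, coe_star, ← mul_coe, star_mul, he.isSelfAdjoint.star_eq, mul_assoc, hee,
    he.isIdempotentElem.eq]

lemma exists_fst_mul_ne_zero_of_full
    (hfull : ∀ I : TwoSidedIdeal A, IsClosed (I : Set A) → corner e ⊆ I → I = ⊤)
    {c : A} (hc : c ≠ 0) : ∃ s : A, e.fst (s * c) ≠ 0 := by
  by_contra! h
  let I : TwoSidedIdeal A := .mk' {x | ∀ d, x * d * c = 0} (fun d => by simp)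
    (fun hx hy d => by simp [add_mul, hx d, hy d]) (fun hx d => by simp [neg_mul, hx d])
    (fun {x y} hy d => by simp only [mul_assoc] at hy ⊢; rw [hy d, mul_zero])
    (fun {x y} hx d => by simpa only [mul_assoc] using hx (y * d))
  have hI : IsClosed (I : Set A) := by
    rw [TwoSidedIdeal.coe_mk', Set.ofPred_forall]
    exact isClosed_iInter fun d => isClosed_eq (by fun_prop) continuous_const
  have hcorner : corner e ⊆ I := by
    intro a (ha : e * a * e = a)
    rw [SetLike.mem_coe, TwoSidedIdeal.mem_mk']
    intro d
    apply coe_injective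
    rw [coe_zero, mul_assoc, coe_mul, ← ha, mul_assoc (e * (a : 𝓜(ℂ, A))) e, mul_coe e (d * c), h d,
      coe_zero, mul_zero]
  refine hc (CStarRing.eq_zero_of_forall_mul_mul_eq_zero fun x d => ?_)
  have : x ∈ I := by rw [hfull I hI hcorner]; exact TwoSidedIdeal.mem_top A
  exact (TwoSidedIdeal.mem_mk' _ _ _ _ _ _ x).mp this d

end DoubleCentralizer

/-- Let `D` be a C*-algebra and `e` a projection in the multiplier algebra `M(D)`.  Let
`D_e = {a ∈ D : e a e = a}` be the corner of `D` determined by `e`, and assume that the corner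
is full (the smallest closed two-sided ideal of `D` containing `D_e` is `D`).  If `D` contains
a nonzero commutative hereditary C*-subalgebra, then `D_e` contains a nonzero commutative
hereditary C*-subalgebra of `D`. -/
theorem corner_contains_comm_hereditary
    {D : Type*} [NonUnitalCStarAlgebra D] [PartialOrder D] [StarOrderedRing D]
    (e : 𝓜(ℂ, D)) (he₁ : star e = e) (he₂ : e * e = e)
    (corner : Set D) (hcorner : corner = {a : D | e * (a : 𝓜(ℂ, D)) * e = (a : 𝓜(ℂ, D))})
    (hfull : ∀ I : TwoSidedIdeal D, IsClosed (I : Set D) → corner ⊆ (I : Set D) → I = ⊤)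
    (hD : ∃ B : NonUnitalStarSubalgebra ℂ D, IsHereditarySubalgebra B ∧
      (∃ x ∈ B, x ≠ 0) ∧ ∀ x ∈ B, ∀ y ∈ B, x * y = y * x) :
    ∃ B : NonUnitalStarSubalgebra ℂ D, IsHereditarySubalgebra B ∧ (B : Set D) ⊆ corner ∧
      (∃ x ∈ B, x ≠ 0) ∧ ∀ x ∈ B, ∀ y ∈ B, x * y = y * x := by
  subst hcorner
  have he : IsStarProjection e := ⟨he₂, he₁⟩
  obtain ⟨B, hB, ⟨x, hxB, hx⟩, hBcomm⟩ := hD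
  obtain ⟨b, hbB, hb, hbb⟩ : ∃ b ∈ B, star b = b ∧ b * b ≠ 0 := by
    refine ⟨star x * x, mul_mem (star_mem hxB) hxB, (IsSelfAdjoint.star_mul_self x).star_eq, ?_⟩
    intro h
    apply hx
    rwa [← CStarRing.star_mul_self_eq_zero_iff, ← CStarRing.star_mul_self_eq_zero_iff, star_mul,
      star_star]
  obtain ⟨s, hs⟩ := DoubleCentralizer.exists_fst_mul_ne_zero_of_full hfull hbb
  set w := e.fst (s * b)
  have hw : star w * w ∈ B := by
    rw [DoubleCentralizer.star_fst_mul_fst he, DoubleCentralizer.fst_mul, star_mul]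
    simpa only [mul_assoc] using hB.star_mul_mul_mem hbB (star s * e.fst s)
  have hwb : w * b = e.fst (s * (b * b)) := by rw [← mul_assoc s, DoubleCentralizer.fst_mul]
  refine ⟨(B.conj hw).topologicalClosure, hB.topologicalClosure_conj hw,
    closure_minimal ?_ (DoubleCentralizer.isClosed_corner e),
    ⟨w * (b * b) * star w, subset_closure ⟨b * b, mul_mem hbB hbB, rfl⟩, fun h => hs ?_⟩,
    NonUnitalStarSubalgebra.topologicalClosure_mul_comm
      (NonUnitalStarSubalgebra.conj_mul_comm hw hBcomm)⟩
  · rintro _ ⟨c, -, rfl⟩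
    exact DoubleCentralizer.fst_mul_mul_star_fst_mem_corner he _ c
  · rw [← hwb, ← CStarRing.mul_star_self_eq_zero_iff, star_mul, hb, ← h]
    simp only [mul_assoc]
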